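/- In the braid group B_q with r < q, the word (Π_1^{q-1})^r (Π_1^{r-1})^{-r} equals the positive word Π_1^{q-r} Π_2^{q-r+1} ⋯ Π_{r-1}^{q-2} Π_r^{q-1}; in particular, r partial twists on q strands followed by one negative full twist on the first r strands is a positive braid. -/

import Mathlib

/-- The generators `σ 1, …, σ (q-1)` of the braid group `B_q`:
far-apart generators commute and adjacent generators satisfy the braid relation. -/
def IsBraidGensUpTo {G : Type*} [Group G] (q : ℕ) (σ : ℕ → G) : Prop :=
  (∀ i j, 1 ≤ i → i + 1 < j → j + 1 ≤ q → σ i * σ j = σ j * σ i) ∧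
  (∀ i, 1 ≤ i → i + 2 ≤ q → σ i * σ (i + 1) * σ i = σ (i + 1) * σ i * σ (i + 1))

/-- `piProd σ a b = σ_b * σ_{b-1} * ⋯ * σ_a` (decreasing indices); identity if `a > b`. -/
def piProd {G : Type*} [Group G] (σ : ℕ → G) (a b : ℕ) : G :=
  (((List.range' a (b + 1 - a)).reverse).map σ).prod

/-- `blockA σ q r = Π_1^r Π_2^{r+1} ⋯ Π_{q-r}^{q-1}`. -/
def blockA {G : Type*} [Group G] (σ : ℕ → G) (q r : ℕ) : G :=
  ((List.range (q - r)).map (fun j => piProd σ (j + 1) (r + j))).prod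

/-- `blockB σ q r = Π_1^{q-r} Π_2^{q-r+1} ⋯ Π_r^{q-1}`. -/
def blockB {G : Type*} [Group G] (σ : ℕ → G) (q r : ℕ) : G :=
  ((List.range r).map (fun j => piProd σ (j + 1) (q - r + j))).prod

section Aux

variable {G : Type*} [Group G] (σ : ℕ → G)

/-- increasing word `σ_1 σ_2 ⋯ σ_k` -/
def lamProd (k : ℕ) : G := ((List.range' 1 k).map σ).prod

lemma lamProd_zero : lamProd σ 0 = 1 := by simp [lamProd]

lemma lamProd_succ (k : ℕ) : lamProd σ (k + 1) = lamProd σ k * σ (k + 1) := by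
  simp [lamProd, List.range'_concat, Nat.add_comm 1 k]

lemma piProd_empty {a b : ℕ} (hba : b < a) : piProd σ a b = 1 := by
  simp [piProd, Nat.sub_eq_zero_of_le (by omega : b + 1 ≤ a)]

lemma piProd_top {a b : ℕ} (hab : a ≤ b + 1) : piProd σ a (b + 1) = σ (b + 1) * piProd σ a b := by
  have h1 : b + 1 + 1 - a = (b + 1 - a) + 1 := by omega
  have h2 : a + (b + 1 - a) = b + 1 := by omega
  simp [piProd, h1, List.range'_concat, h2]

lemma piProd_bot {a b : ℕ} (hab : a ≤ b) : piProd σ a b = piProd σ (a + 1) b * σ a := by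
  have h1 : b + 1 - a = (b + 1 - (a + 1)) + 1 := by omega
  rw [piProd, piProd, h1, List.range'_succ]
  simp

lemma piProd_single (a : ℕ) : piProd σ a a = σ a := by
  simp [piProd, show a + 1 - a = 1 by omega]

lemma piProd_split {a b c : ℕ} (h1 : a ≤ c + 1) (h2 : c ≤ b) :
    piProd σ a b = piProd σ (c + 1) b * piProd σ a c := by
  have key : List.range' a (c + 1 - a) ++ List.range' (c + 1) (b - c) = List.range' a (b + 1 - a) := by
    have := List.range'_append (s := a) (m := c + 1 - a) (n := b - c) (step := 1)
    rw [show a + 1 * (c + 1 - a) = c + 1 by omega] at this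
    rw [this, show c + 1 - a + (b - c) = b + 1 - a by omega]
  rw [piProd, piProd, piProd, ← key]
  simp

variable {q : ℕ} (h : IsBraidGensUpTo q σ)
include h

lemma comm_left {i a b : ℕ} (hi : 1 ≤ i) (hia : i + 1 < a) (hbq : b + 1 ≤ q) :
    σ i * piProd σ a b = piProd σ a b * σ i := by
  induction b with
  | zero => rw [piProd_empty σ (by omega)]; group
  | succ b ih =>
    by_cases hab : a ≤ b + 1
    · rw [piProd_top σ hab, ← mul_assoc, h.1 i (b + 1) hi (by omega) hbq, mul_assoc,
        ih (by omega), mul_assoc]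
    · rw [piProd_empty σ (by omega)]; group

lemma comm_right {i a b : ℕ} (ha : 1 ≤ a) (hbi : b + 1 < i) (hiq : i + 1 ≤ q) :
    σ i * piProd σ a b = piProd σ a b * σ i := by
  induction b with
  | zero => rw [piProd_empty σ (by omega)]; group
  | succ b ih =>
    by_cases hab : a ≤ b + 1
    · rw [piProd_top σ hab, ← mul_assoc, ← h.1 (b + 1) i (by omega) (by omega) hiq, mul_assoc,
        ih (by omega), mul_assoc]
    · rw [piProd_empty σ (by omega)]; group

lemma lam_comm {k a b : ℕ} (hka : k + 1 < a) (hbq : b + 1 ≤ q) :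
    lamProd σ k * piProd σ a b = piProd σ a b * lamProd σ k := by
  induction k with
  | zero => rw [lamProd_zero]; group
  | succ k ih =>
    rw [lamProd_succ, mul_assoc, comm_left σ h (by omega) (by omega) hbq, ← mul_assoc,
      ih (by omega), mul_assoc]

/-- `δ_{c+1} σ_{i+1} = σ_i δ_{c+1}` where `δ_{c+1} = Π_1^c`. -/
lemma delta_sigma {i c : ℕ} (hi : 1 ≤ i) (hic : i + 1 ≤ c) (hcq : c + 1 ≤ q) :
    piProd σ 1 c * σ (i + 1) = σ i * piProd σ 1 c := by
  obtain ⟨j, rfl⟩ : ∃ j, i = j + 1 := ⟨i - 1, by omega⟩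
  have e1 : piProd σ 1 c = piProd σ (j + 3) c * piProd σ 1 (j + 2) :=
    piProd_split σ (by omega) (by omega)
  have e2 : piProd σ 1 (j + 2) = σ (j + 2) * (σ (j + 1) * piProd σ 1 j) := by
    rw [piProd_top σ (by omega), piProd_top σ (by omega)]
  have hb : ∀ X : G, σ (j + 2) * (σ (j + 1) * (σ (j + 2) * X))
      = σ (j + 1) * (σ (j + 2) * (σ (j + 1) * X)) := by
    intro X
    have hbr := h.2 (j + 1) (by omega) (by omega)
    rw [show j + 1 + 1 = j + 2 by omega] at hbr
    rw [← mul_assoc, ← mul_assoc, ← hbr, mul_assoc, mul_assoc]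
  rw [e1, e2]
  calc piProd σ (j + 3) c * (σ (j + 2) * (σ (j + 1) * piProd σ 1 j)) * σ (j + 2)
      = piProd σ (j + 3) c * (σ (j + 2) * (σ (j + 1) * (piProd σ 1 j * σ (j + 2)))) := by
        group
    _ = piProd σ (j + 3) c * (σ (j + 2) * (σ (j + 1) * (σ (j + 2) * piProd σ 1 j))) := by
        rw [comm_right σ h (by omega) (by omega) (by omega)]
    _ = piProd σ (j + 3) c * (σ (j + 1) * (σ (j + 2) * (σ (j + 1) * piProd σ 1 j))) := by
        rw [hb]
    _ = (piProd σ (j + 3) c * σ (j + 1)) * (σ (j + 2) * (σ (j + 1) * piProd σ 1 j)) := by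
        group
    _ = (σ (j + 1) * piProd σ (j + 3) c) * (σ (j + 2) * (σ (j + 1) * piProd σ 1 j)) := by
        rw [← comm_left σ h (by omega) (by omega) (by omega)]
    _ = σ (j + 1) * (piProd σ (j + 3) c * (σ (j + 2) * (σ (j + 1) * piProd σ 1 j))) := by
        group

/-- `δ_{c+1} Π_{a+1}^{b+1} = Π_a^b δ_{c+1}`. -/
lemma delta_shift {a b c : ℕ} (ha : 1 ≤ a) (hbc : b + 1 ≤ c) (hcq : c + 1 ≤ q) :
    piProd σ 1 c * piProd σ (a + 1) (b + 1) = piProd σ a b * piProd σ 1 c := by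
  induction b with
  | zero =>
    rw [piProd_empty σ (by omega : (1:ℕ) < a + 1), piProd_empty σ (by omega : (0:ℕ) < a)]
    group
  | succ b ih =>
    by_cases hab : a ≤ b + 1
    · rw [piProd_top σ (by omega : a + 1 ≤ b + 1 + 1), ← mul_assoc,
        delta_sigma σ h (by omega) (by omega) hcq, mul_assoc, ih (by omega),
        ← mul_assoc, ← piProd_top σ hab]
    · rw [piProd_empty σ (by omega : b + 1 + 1 < a + 1), piProd_empty σ (by omega : b + 1 < a)]
      group

/-- `Λ_k Π_{k+1}^m = Π_{k+2}^m Λ_{k+1}`. -/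
lemma lam_slide {k m : ℕ} (hkm : k + 1 ≤ m) (hmq : m + 1 ≤ q) :
    lamProd σ k * piProd σ (k + 1) m = piProd σ (k + 2) m * lamProd σ (k + 1) := by
  rw [piProd_bot σ hkm, ← mul_assoc, lam_comm σ h (by omega) hmq, mul_assoc, ← lamProd_succ]

/-- Inner induction for the step lemma.  Here the ambient strand count is `p = r+1+t`,
`δ_p = Π_1^{r+t}`. -/
lemma stepAux {r t : ℕ} (ht : 1 ≤ t) (hq : r + 1 + t ≤ q) :
    ∀ k, k ≤ r →
      piProd σ 1 (r + t) * ((List.range k).map (fun j => piProd σ (j + 1) (t + 1 + j))).prod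
      = ((List.range k).map (fun j => piProd σ (j + 1) (t + j))).prod
          * piProd σ 1 (r + t) * lamProd σ k := by
  intro k
  induction k with
  | zero => intro _; simp [lamProd_zero]
  | succ k ih =>
    intro hk
    rw [List.range_succ, List.map_append, List.map_append, List.prod_append, List.prod_append]
    simp only [List.map_cons, List.map_nil, List.prod_cons, List.prod_nil, mul_one]
    set F := (List.map (fun j => piProd σ (j + 1) (t + 1 + j)) (List.range k)).prod with hF
    set Gm := (List.map (fun j => piProd σ (j + 1) (t + j)) (List.range k)).prod with hG
    have e1 : lamProd σ k * piProd σ (k + 1) (t + 1 + k)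
        = piProd σ (k + 2) (t + 1 + k) * lamProd σ (k + 1) :=
      lam_slide σ h (by omega) (by omega)
    have e2 : piProd σ 1 (r + t) * piProd σ (k + 2) (t + 1 + k)
        = piProd σ (k + 1) (t + k) * piProd σ 1 (r + t) := by
      have := delta_shift σ h (a := k + 1) (b := t + k) (c := r + t)
        (by omega) (by omega) (by omega)
      rwa [show k + 1 + 1 = k + 2 by omega, show t + k + 1 = t + 1 + k by omega] at this
    calc piProd σ 1 (r + t) * (F * piProd σ (k + 1) (t + 1 + k))
        = (piProd σ 1 (r + t) * F) * piProd σ (k + 1) (t + 1 + k) := by group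
      _ = (Gm * piProd σ 1 (r + t) * lamProd σ k) * piProd σ (k + 1) (t + 1 + k) := by
          rw [ih (by omega)]
      _ = Gm * piProd σ 1 (r + t) * (lamProd σ k * piProd σ (k + 1) (t + 1 + k)) := by group
      _ = Gm * piProd σ 1 (r + t) * (piProd σ (k + 2) (t + 1 + k) * lamProd σ (k + 1)) := by
          rw [e1]
      _ = Gm * (piProd σ 1 (r + t) * piProd σ (k + 2) (t + 1 + k)) * lamProd σ (k + 1) := by
          group
      _ = Gm * (piProd σ (k + 1) (t + k) * piProd σ 1 (r + t)) * lamProd σ (k + 1) := by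
          rw [e2]
      _ = Gm * piProd σ (k + 1) (t + k) * piProd σ 1 (r + t) * lamProd σ (k + 1) := by group

/-- Step lemma: `δ_p · blockB p r = blockB p (r+1) · Π_1^r · Λ_r` for `p = r+1+t`. -/
lemma lemB {r t : ℕ} (ht : 1 ≤ t) (hq : r + 1 + t ≤ q) :
    piProd σ 1 (r + t) * blockB σ (r + 1 + t) r
      = blockB σ (r + 1 + t) (r + 1) * piProd σ 1 r * lamProd σ r := by
  have hB1 : blockB σ (r + 1 + t) r
      = ((List.range r).map (fun j => piProd σ (j + 1) (t + 1 + j))).prod := by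
    rw [blockB, show r + 1 + t - r = t + 1 by omega]
  have hB2 : blockB σ (r + 1 + t) (r + 1)
      = ((List.range r).map (fun j => piProd σ (j + 1) (t + j))).prod
          * piProd σ (r + 1) (t + r) := by
    rw [blockB, show r + 1 + t - (r + 1) = t by omega, List.range_succ]
    simp
  have hδ : piProd σ 1 (r + t) = piProd σ (r + 1) (t + r) * piProd σ 1 r := by
    rw [show t + r = r + t by omega]
    exact piProd_split σ (by omega) (by omega)
  rw [hB1, hB2, stepAux σ h ht hq r le_rfl, hδ]
  group

omit h in
lemma lamProd_eq_range (k : ℕ) :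
    lamProd σ k = ((List.range k).map fun j => σ (j + 1)).prod := by
  induction k with
  | zero => simp [lamProd]
  | succ k ih => rw [lamProd_succ, List.range_succ, ih]; simp

omit h in
lemma blockB_lam (u : ℕ) : blockB σ (u + 1) u = lamProd σ u := by
  rw [blockB, show u + 1 - u = 1 by omega, lamProd_eq_range σ]
  refine congrArg _ (List.map_congr_left fun j _ => ?_)
  rw [show 1 + j = j + 1 by omega, piProd_single]

/-- Main induction: `δ_p^r = blockB p r · (Π_1^{r-1})^r` for `p = r+1+t ≤ q`. -/
lemma mainAux : ∀ r t : ℕ, r + 1 + t ≤ q →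
    (piProd σ 1 (r + t)) ^ r = blockB σ (r + 1 + t) r * (piProd σ 1 (r - 1)) ^ r := by
  intro r
  induction r with
  | zero => intro t _; simp [blockB]
  | succ u ih =>
    intro t hq
    rw [show u + 1 + 1 + t = u + 1 + (t + 1) by omega, show u + 1 - 1 = u by omega,
      show u + 1 + t = u + (t + 1) by omega, pow_succ' (piProd σ 1 (u + (t + 1))) u,
      ih (t + 1) (by omega), ← mul_assoc, lemB σ h (by omega) (by omega),
      pow_succ' (piProd σ 1 u) u]
    have h3 : lamProd σ u * (piProd σ 1 (u - 1)) ^ u = (piProd σ 1 u) ^ u := by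
      have h0 := ih 0 (by omega)
      simp only [Nat.add_zero] at h0
      rw [h0, blockB_lam σ]
    calc blockB σ (u + 1 + (t + 1)) (u + 1) * piProd σ 1 u * lamProd σ u
          * (piProd σ 1 (u - 1)) ^ u
        = blockB σ (u + 1 + (t + 1)) (u + 1) * piProd σ 1 u
            * (lamProd σ u * (piProd σ 1 (u - 1)) ^ u) := by group
      _ = blockB σ (u + 1 + (t + 1)) (u + 1) * piProd σ 1 u * (piProd σ 1 u) ^ u := by
          rw [h3]
      _ = blockB σ (u + 1 + (t + 1)) (u + 1) * (piProd σ 1 u * (piProd σ 1 u) ^ u) := by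
          group

end Aux

/-- In `B_q`, for `2 ≤ r < q`,
`(Π_1^{q-1})^r (Π_1^{r-1})^{-r} = Π_1^{q-r} Π_2^{q-r+1} ⋯ Π_r^{q-1}`, a positive word. -/
theorem stmt7 {G : Type*} [Group G] (q : ℕ) (σ : ℕ → G) (h : IsBraidGensUpTo q σ)
    (r : ℕ) (hr : 2 ≤ r) (hrq : r < q) :
    (piProd σ 1 (q - 1)) ^ r * ((piProd σ 1 (r - 1)) ^ r)⁻¹ = blockB σ q r := by
  have := mainAux σ h r (q - r - 1) (by omega)
  rw [show r + 1 + (q - r - 1) = q by omega, show r + (q - r - 1) = q - 1 by omega] at this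
  rw [this]
  group
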